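/- Let q = 2^s with s ≥ 2, n = q^m + 1, α ∈ GF(q^{2m}) a primitive n-th root of unity, and C the cyclic code of length n over GF(q) with generator polynomial the minimal polynomial M_α(x) of α over GF(q). Then the standardly extended code C̄(-1) has parameters [n+1, n-2m, 4] and is distance-optimal: no [n+1, n-2m, d] code over GF(q) with d ≥ 5 exists. -/

import Mathlib

open Finset

variable {F : Type*} [Field F] [Fintype F] [DecidableEq F]

/-- The extended code of `C` by the vector `u`: append the coordinate `∑ uᵢ cᵢ`. -/
def extCode {n : ℕ} (C : Submodule F (Fin n → F)) (u : Fin n → F) :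
    Submodule F (Fin (n + 1) → F) where
  carrier := {x | (fun i => x i.castSucc) ∈ C ∧
    x (Fin.last n) = ∑ i, u i * x i.castSucc}
  add_mem' := by
    rintro a b ⟨ha, ha'⟩ ⟨hb, hb'⟩
    refine ⟨C.add_mem ha hb, ?_⟩
    simp only [Pi.add_apply, ha', hb', mul_add, Finset.sum_add_distrib]
  zero_mem' := ⟨C.zero_mem, by simp⟩
  smul_mem' := by
    rintro a x ⟨hx, hx'⟩
    refine ⟨C.smul_mem a hx, ?_⟩
    simp only [Pi.smul_apply, smul_eq_mul, hx', Finset.mul_sum]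
    exact Finset.sum_congr rfl fun i _ => by ring

/-- The (Euclidean) dual code. -/
def dualCode {n : ℕ} (C : Submodule F (Fin n → F)) : Submodule F (Fin n → F) where
  carrier := {x | ∀ c ∈ C, ∑ i, x i * c i = 0}
  add_mem' := by
    intro a b ha hb c hc
    simp only [Pi.add_apply, add_mul, Finset.sum_add_distrib, ha c hc, hb c hc, add_zero]
  zero_mem' := by intro c hc; simp
  smul_mem' := by
    intro a x hx c hc
    simp only [Pi.smul_apply, smul_eq_mul, mul_assoc, ← Finset.mul_sum, hx c hc, mul_zero]

/-- Minimum (Hamming) distance of a linear code: least weight of a nonzero codeword. -/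
noncomputable def minDist {n : ℕ} (C : Submodule F (Fin n → F)) : ℕ :=
  sInf {w | ∃ c ∈ C, c ≠ 0 ∧ hammingNorm c = w}

/-- Number of codewords of Hamming weight `w`. -/
noncomputable def weightCount {n : ℕ} (C : Submodule F (Fin n → F)) (w : ℕ) : ℕ :=
  Nat.card {c : C // hammingNorm (c : Fin n → F) = w}


set_option linter.unusedSectionVars false
set_option maxHeartbeats 1000000

section Helpers
variable {F : Type*} [Field F] [Fintype F] [DecidableEq F]

lemma mem_extCode {n : ℕ} {C : Submodule F (Fin n → F)} {u : Fin n → F}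
    {x : Fin (n + 1) → F} :
    x ∈ extCode C u ↔ (fun i => x i.castSucc) ∈ C ∧
      x (Fin.last n) = ∑ i, u i * x i.castSucc := Iff.rfl

/-- The linear "extend" map. -/
def extLM {n : ℕ} (u : Fin n → F) : (Fin n → F) →ₗ[F] (Fin (n + 1) → F) where
  toFun c := Fin.snoc c (∑ i, u i * c i)
  map_add' a b := by
    funext k
    refine Fin.lastCases ?_ (fun i => ?_) k
    · simp [Fin.snoc_last, mul_add, Finset.sum_add_distrib]
    · simp [Fin.snoc_castSucc]
  map_smul' r a := by
    funext k
    refine Fin.lastCases ?_ (fun i => ?_) k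
    · simp only [Fin.snoc_last, Pi.smul_apply, smul_eq_mul, RingHom.id_apply, Finset.mul_sum]
      exact Finset.sum_congr rfl fun i _ => by ring
    · simp [Fin.snoc_castSucc]

lemma extLM_injective {n : ℕ} (u : Fin n → F) : Function.Injective (extLM (F := F) u) := by
  intro a b hab
  funext i
  have := congrFun hab i.castSucc
  simpa [extLM, Fin.snoc_castSucc] using this

lemma extCode_eq_map {n : ℕ} (C : Submodule F (Fin n → F)) (u : Fin n → F) :
    extCode C u = Submodule.map (extLM (F := F) u) C := by
  ext x
  constructor
  · rintro ⟨h1, h2⟩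
    refine ⟨fun i => x i.castSucc, h1, ?_⟩
    funext k
    refine Fin.lastCases ?_ (fun i => ?_) k
    · simpa [extLM, Fin.snoc_last] using h2.symm
    · simp [extLM, Fin.snoc_castSucc]
  · rintro ⟨c, hc, rfl⟩
    constructor
    · simpa [extLM, Fin.snoc_castSucc] using hc
    · simp [extLM, Fin.snoc_castSucc, Fin.snoc_last]

lemma finrank_extCode {n : ℕ} (C : Submodule F (Fin n → F)) (u : Fin n → F) :
    Module.finrank F (extCode C u) = Module.finrank F C := by
  rw [extCode_eq_map]
  exact (LinearEquiv.finrank_eq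
    (Submodule.equivMapOfInjective (extLM (F := F) u) (extLM_injective u) C)).symm

/-- Weight splitting for the extended coordinate. -/
lemma hammingNorm_split {n : ℕ} (x : Fin (n + 1) → F) :
    hammingNorm x = hammingNorm (fun i : Fin n => x i.castSucc) +
      (if x (Fin.last n) ≠ 0 then 1 else 0) := by
  classical
  simp only [hammingNorm, Finset.card_filter]
  rw [Fin.sum_univ_castSucc]

end Helpers


/-- The evaluation map at powers of α. -/
noncomputable def evalRoot {F K : Type*} [Field F] [Field K] [Algebra F K]
    (n : ℕ) (α : K) : (Fin n → F) →ₗ[F] K where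
  toFun c := ∑ j, algebraMap F K (c j) * α ^ (j : ℕ)
  map_add' a b := by
    simp only [Pi.add_apply, map_add, add_mul, Finset.sum_add_distrib]
  map_smul' r a := by
    simp only [Pi.smul_apply, smul_eq_mul, map_mul, RingHom.id_apply, Algebra.smul_def,
      Finset.mul_sum]
    exact Finset.sum_congr rfl fun i _ => by ring

lemma finrank_rootCode {F K : Type*} [Field F] [Fintype F] [DecidableEq F]
    [Field K] [Fintype K] [Algebra F K]
    (q s m n : ℕ) (hq : q = 2 ^ s) (hs : 2 ≤ s) (hm : 1 ≤ m)
    (hF : Fintype.card F = q) (hn : n = q ^ m + 1)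
    (hK : Fintype.card K = q ^ (2 * m))
    (α : K) (hα : IsPrimitiveRoot α n)
    (C : Submodule F (Fin n → F))
    (hC : ∀ c, c ∈ C ↔ ∑ j, algebraMap F K (c j) * α ^ (j : ℕ) = 0) :
    Module.finrank F C = n - 2 * m := by
  have hq4 : 4 ≤ q := by
    rw [hq]
    calc (4 : ℕ) = 2 ^ 2 := rfl
    _ ≤ 2 ^ s := Nat.pow_le_pow_right (by norm_num) hs
  have hq1 : 1 < q := by omega
  have hn0 : n ≠ 0 := by
    have : 1 ≤ q ^ m := Nat.one_le_pow _ _ (by omega)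
    omega
  have hαn : α ^ n = 1 := hα.pow_eq_one
  -- finrank F K = 2 * m
  have hfk : Module.finrank F K = 2 * m := by
    have h1 : Fintype.card K = Fintype.card F ^ Module.finrank F K := Module.card_eq_pow_finrank
    rw [hF, hK] at h1
    exact (Nat.pow_right_injective (by omega) h1.symm)
  -- the intermediate field E = F(α)
  have hint : IsIntegral F α := IsIntegral.of_finite F α
  set E := IntermediateField.adjoin F {α} with hE
  have hαE : α ∈ E := IntermediateField.mem_adjoin_simple_self F α
  -- finrank F E = 2 * m
  have hdvd : Module.finrank F E ∣ 2 * m :=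
    ⟨Module.finrank E K, by rw [Module.finrank_mul_finrank F E K, hfk]⟩
  have hcardE : Nat.card E = q ^ Module.finrank F E := by
    haveI : Fintype E := Fintype.ofFinite E
    rw [Nat.card_eq_fintype_card, Module.card_eq_pow_finrank (K := F) (V := E), hF]
  have hEpos : 1 ≤ Module.finrank F E := by
    by_contra h
    have h0 : Module.finrank F E = 0 := by omega
    rw [h0, pow_zero] at hcardE
    haveI : Fintype E := Fintype.ofFinite E
    rw [Nat.card_eq_fintype_card] at hcardE
    have : 1 < Fintype.card E := Fintype.one_lt_card
    omega
  -- n divides q ^ finrank - 1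
  have hαE' : (⟨α, hαE⟩ : E) ^ n = 1 := by
    ext
    push_cast
    exact hαn
  have hudvd : n ∣ Nat.card E - 1 := by
    have hu : IsUnit (⟨α, hαE⟩ : E) := IsUnit.of_pow_eq_one hαE' hn0
    have h1 : orderOf (⟨α, hαE⟩ : E) = n := by
      have h2 : orderOf α = n := (hα.eq_orderOf).symm
      have h3 := orderOf_injective (algebraMap ↥E K).toMonoidHom
        (fun a b h => (algebraMap ↥E K).injective h) (⟨α, hαE⟩ : ↥E)
      rw [← h2, ← h3]
      rfl
    have h4 : orderOf hu.unit = n := by rw [← orderOf_units, hu.unit_spec, h1]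
    have h5 : orderOf hu.unit ∣ Nat.card Eˣ := orderOf_dvd_natCard _
    rw [h4, Nat.card_units] at h5
    exact h5
  have hfE : Module.finrank F E = 2 * m := by
    by_contra hne
    obtain ⟨e, he⟩ := hdvd
    have he2 : 2 ≤ e := by
      rcases e with _ | _ | e
      · omega
      · omega
      · omega
    have hle : Module.finrank F E ≤ m := by nlinarith
    have h1 : q ^ Module.finrank F E ≤ q ^ m := Nat.pow_le_pow_right (by omega) hle
    have h2 : n ≤ Nat.card E - 1 := by
      refine Nat.le_of_dvd ?_ hudvd
      rw [hcardE]
      have : 1 < q ^ Module.finrank F E := Nat.one_lt_pow (by omega) hq1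
      omega
    rw [hcardE] at h2
    omega
  -- C is the kernel of the evaluation map
  have hCk : C = LinearMap.ker (evalRoot (F := F) n α) := by
    ext c
    rw [hC c, LinearMap.mem_ker]
    rfl
  -- range of the evaluation map
  have hrange : LinearMap.range (evalRoot (F := F) n α) =
      Subalgebra.toSubmodule E.toSubalgebra := by
    apply le_antisymm
    · rintro x ⟨c, rfl⟩
      show (∑ j, algebraMap F K (c j) * α ^ (j : ℕ)) ∈ E.toSubalgebra
      exact Subalgebra.sum_mem _ fun j _ =>
        mul_mem (Subalgebra.algebraMap_mem _ _) (pow_mem hαE _)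
    · rw [hE, IntermediateField.adjoin_simple_toSubalgebra_of_isAlgebraic hint.isAlgebraic,
        Algebra.adjoin_eq_span, Submodule.span_le]
      rintro x hx
      obtain ⟨k, rfl⟩ := Submonoid.mem_closure_singleton.mp hx
      set i0 : Fin n := ⟨k % n, Nat.mod_lt _ (by omega)⟩ with hi0
      refine ⟨Pi.single i0 (1 : F), ?_⟩
      show (∑ j : Fin n, algebraMap F K ((Pi.single i0 (1 : F) : Fin n → F) j) * α ^ (j : ℕ)) = α ^ k
      rw [Finset.sum_eq_single i0]
      · rw [Pi.single_eq_same, map_one, one_mul]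
        exact (pow_eq_pow_mod k hαn).symm
      · intro b _ hb
        rw [Pi.single_eq_of_ne hb, map_zero, zero_mul]
      · intro h
        exact absurd (Finset.mem_univ _) h
  -- rank-nullity
  have hrn := LinearMap.finrank_range_add_finrank_ker (evalRoot (F := F) n α)
  rw [hrange, Module.finrank_fin_fun, Subalgebra.finrank_toSubmodule] at hrn
  have hEfr : Module.finrank F E.toSubalgebra = 2 * m := hfE
  rw [hEfr] at hrn
  rw [hCk]
  omega

lemma no_good_code {F : Type*} [Field F] [Fintype F] [DecidableEq F]
    (q m n : ℕ) (hq4 : 4 ≤ q) (hm : 1 ≤ m) (hF : Fintype.card F = q) (hn : n = q ^ m + 1)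
    (D : Submodule F (Fin (n + 1) → F))
    (hD : Module.finrank F D = n - 2 * m) (h5 : 5 ≤ minDist D) : False := by
  classical
  have hw : ∀ c ∈ D, c ≠ 0 → 5 ≤ hammingNorm c := by
    intro c hc hc0
    exact le_trans h5 (Nat.sInf_le ⟨c, hc, hc0, rfl⟩)
  have hqQ : q ≤ q ^ m := Nat.le_self_pow (by omega) q
  have h2m : 2 * m + 1 ≤ n := by
    have h1 : m < 2 ^ m := Nat.lt_two_pow_self (n := m)
    have h2 : 2 ≤ 2 ^ m := by
      calc 2 = 2 ^ 1 := rfl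
      _ ≤ 2 ^ m := Nat.pow_le_pow_right (by omega) hm
    have h3 : 2 ^ m * 2 ^ m ≤ q ^ m := by
      have : 2 * 2 ≤ q := by omega
      calc 2 ^ m * 2 ^ m = (2 * 2) ^ m := by rw [mul_pow]
      _ ≤ q ^ m := Nat.pow_le_pow_left (by omega) m
    have h4 : 2 * (m + 1) ≤ 2 ^ m * 2 ^ m := by nlinarith
    omega
  -- the injection
  let ι : (Σ j : Fin (n + 1), Fin (j : ℕ)) → Fin (n + 1) :=
    fun t => ⟨(t.2 : ℕ), lt_trans t.2.isLt t.1.isLt⟩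
  have hι : ∀ t, (ι t : ℕ) < (t.1 : ℕ) := fun t => t.2.isLt
  let vec : (Σ j : Fin (n + 1), Fin (j : ℕ)) → F → F → (Fin (n + 1) → F) :=
    fun t a b k => if k = ι t then a else if k = t.1 then b else 0
  let T := (Σ j : Fin (n + 1), Fin (j : ℕ)) × {a : F // a ≠ 0} × {b : F // b ≠ 0}
  let Ψ : ↥D × T → (Fin (n + 1) → F) :=
    fun p => ↑p.1 + vec p.2.1 p.2.2.1.1 p.2.2.2.1
  have hvec_norm : ∀ t t' a b a' b', hammingNorm (vec t' a' b' - vec t a b) ≤ 4 := by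
    intro t t' a b a' b'
    have hsub : ({k | (vec t' a' b' - vec t a b) k ≠ 0} : Finset (Fin (n+1)))
        ⊆ {ι t, t.1, ι t', t'.1} := by
      intro k hk
      simp only [Finset.mem_filter, Finset.mem_univ, true_and] at hk
      simp only [Finset.mem_insert, Finset.mem_singleton]
      by_contra hcon
      push_neg at hcon
      obtain ⟨h1, h2, h3, h4⟩ := hcon
      apply hk
      simp [vec, h1, h2, h3, h4]
    calc hammingNorm (vec t' a' b' - vec t a b)
        ≤ ({ι t, t.1, ι t', t'.1} : Finset (Fin (n+1))).card := Finset.card_le_card hsub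
    _ ≤ 4 := by
        apply le_trans (Finset.card_insert_le _ _)
        have h2 := Finset.card_insert_le t.1 ({ι t', t'.1} : Finset (Fin (n+1)))
        have h3 := Finset.card_insert_le (ι t') ({t'.1} : Finset (Fin (n+1)))
        simp only [Finset.card_singleton] at *
        omega
  have hinj : Function.Injective Ψ := by
    rintro ⟨d, t, a, b⟩ ⟨d', t', a', b'⟩ h
    simp only [Ψ] at h
    have hveq : (↑d - ↑d' : Fin (n + 1) → F) = vec t' a'.1 b'.1 - vec t a.1 b.1 :=
      sub_eq_sub_iff_add_eq_add.mpr (h.trans (add_comm _ _))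
    have hd0 : (↑d - ↑d' : Fin (n + 1) → F) = 0 := by
      by_contra hne
      have h5' := hw _ (sub_mem d.2 d'.2) hne
      rw [hveq] at h5'
      have := hvec_norm t t' a.1 b.1 a'.1 b'.1
      omega
    have hdd : d = d' := Subtype.ext (by rwa [sub_eq_zero] at hd0)
    have hv : vec t a.1 b.1 = vec t' a'.1 b'.1 := by
      have h0 : vec t' a'.1 b'.1 - vec t a.1 b.1 = 0 := by rw [← hveq, hd0]
      rw [sub_eq_zero] at h0
      exact h0.symm
    have hne_bt : t.1 ≠ ι t := by
      intro hcon
      have := hι t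
      rw [← hcon] at this
      omega
    have hne_bt' : t'.1 ≠ ι t' := by
      intro hcon
      have := hι t'
      rw [← hcon] at this
      omega
    have ht1 : t.1 = t'.1 := by
      have e1 := congrFun hv t.1
      simp only [vec, if_neg hne_bt, if_true] at e1
      by_cases hA : t.1 = ι t'
      · exfalso
        have hlt1 : (t.1 : ℕ) < (t'.1 : ℕ) := by
          have := hι t'
          rw [← hA] at this
          exact this
        have e2 := congrFun hv t'.1
        simp only [vec, if_neg hne_bt', if_true] at e2
        by_cases hB : t'.1 = ι t
        · have := hι t
          rw [← hB] at this
          omega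
        · by_cases hCq : t'.1 = t.1
          · rw [hCq] at hlt1; omega
          · rw [if_neg hB, if_neg hCq] at e2
            exact b'.2 e2.symm
      · by_cases hB : t.1 = t'.1
        · exact hB
        · rw [if_neg hA, if_neg hB] at e1
          exact absurd e1 b.2
    have hιeq : ι t = ι t' := by
      have e3 := congrFun hv (ι t)
      simp only [vec, if_true] at e3
      by_cases hA : ι t = ι t'
      · exact hA
      · exfalso
        by_cases hB : ι t = t'.1
        · have h1 := hι t
          rw [hB, ← ht1] at h1
          omega
        · rw [if_neg hA, if_neg hB] at e3
          exact a.2 e3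
    have haa : a = a' := by
      have e3 := congrFun hv (ι t)
      simp only [vec, if_true, hιeq] at e3
      exact Subtype.ext e3
    have hbb : b = b' := by
      have e4 := congrFun hv t.1
      simp only [vec, if_neg hne_bt, if_true] at e4
      have hA2 : t.1 ≠ ι t' := by rw [← hιeq]; exact hne_bt
      rw [if_neg hA2, if_pos ht1] at e4
      exact Subtype.ext e4
    have htt : t = t' := by
      obtain ⟨j, i⟩ := t
      obtain ⟨j', i'⟩ := t'
      simp only at ht1
      subst ht1
      have hval := congrArg Fin.val hιeq
      have : i = i' := by
        apply Fin.ext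
        exact hval
      rw [this]
    exact congrArg₂ Prod.mk hdd (congrArg₂ Prod.mk htt (congrArg₂ Prod.mk haa hbb))
  -- cardinality computation
  haveI : Fintype ↥D := Fintype.ofFinite _
  have hcard := Fintype.card_le_of_injective Ψ hinj
  have hcd : Fintype.card ↥D = q ^ (n - 2 * m) := by
    rw [Module.card_eq_pow_finrank (K := F) (V := ↥D), hF, hD]
  have hcne : Fintype.card {a : F // a ≠ 0} = q - 1 := by
    rw [← Fintype.card_congr (unitsEquivNeZero (G₀ := F)), Fintype.card_units, hF]
  have hcS : Fintype.card (Σ j : Fin (n + 1), Fin (j : ℕ)) * 2 = (n + 1) * n := by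
    rw [Fintype.card_sigma]
    simp only [Fintype.card_fin]
    rw [Fin.sum_univ_eq_sum_range (fun i => i) (n + 1)]
    simpa using Finset.sum_range_id_mul_two (n + 1)
  have hcfun : Fintype.card (Fin (n + 1) → F) = q ^ (n + 1) := by
    rw [Fintype.card_fun, hF, Fintype.card_fin]
  rw [Fintype.card_prod, Fintype.card_prod, Fintype.card_prod, hcd, hcne, hcfun] at hcard
  -- cancel q ^ (n - 2m)
  set S := Fintype.card (Σ j : Fin (n + 1), Fin (j : ℕ)) with hS
  have hsplit : q ^ (n + 1) = q ^ (n - 2 * m) * q ^ (2 * m + 1) := by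
    rw [← pow_add]
    congr 1
    omega
  rw [hsplit] at hcard
  have hcancel : S * ((q - 1) * (q - 1)) ≤ q ^ (2 * m + 1) :=
    Nat.le_of_mul_le_mul_left hcard (Nat.pow_pos (by omega))
  have hfin : (n + 1) * n * ((q - 1) * (q - 1)) ≤ 2 * q ^ (2 * m + 1) := by
    calc (n + 1) * n * ((q - 1) * (q - 1)) = (S * 2) * ((q - 1) * (q - 1)) := by rw [hcS]
    _ = 2 * (S * ((q - 1) * (q - 1))) := by ring
    _ ≤ 2 * q ^ (2 * m + 1) := by omega
  -- final contradiction
  have hqq : q ^ (2 * m + 1) = q ^ m * q ^ m * q := by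
    rw [show 2 * m + 1 = m + m + 1 by ring, pow_succ, pow_add]
  obtain ⟨r, hr⟩ : ∃ r, q = r + 1 := ⟨q - 1, by omega⟩
  have hr3 : 3 ≤ r := by omega
  have hq1r : q - 1 = r := by omega
  set Q := q ^ m with hQdef
  have hQ4 : 4 ≤ Q := by omega
  rw [hn, hqq, hq1r, hr] at hfin
  have h1 : 3 * r ≤ r * r := Nat.mul_le_mul_right r hr3
  nlinarith [hfin, h1, hQ4, hr3]

section MinWeight
variable {F K : Type*} [Field F] [Fintype F] [DecidableEq F]
  [Field K] [Fintype K] [Algebra F K]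

lemma char2_eq_of_add_eq_zero' {K : Type*} [Field K] (h2 : ∀ z : K, z + z = 0) {x y : K}
    (h : x + y = 0) : x = y := by linear_combination h - h2 y

lemma rootCode_min_weight
    (q s m n : ℕ) (hq : q = 2 ^ s) (hs : 2 ≤ s) (hm : 1 ≤ m)
    (hF : Fintype.card F = q) (hn : n = q ^ m + 1)
    (α : K) (hα : IsPrimitiveRoot α n)
    (c : Fin n → F)
    (hcsum : ∑ j, algebraMap F K (c j) * α ^ (j : ℕ) = 0)
    (hc0 : c ≠ 0) :
    3 ≤ hammingNorm c ∧ (hammingNorm c = 3 → ∑ i, c i ≠ 0) := by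
  classical
  have hq4 : 4 ≤ q := by
    rw [hq]
    calc (4 : ℕ) = 2 ^ 2 := rfl
    _ ≤ 2 ^ s := Nat.pow_le_pow_right (by omega) hs
  have hn0 : n ≠ 0 := by
    have : 1 ≤ q ^ m := Nat.one_le_pow _ _ (by omega)
    omega
  have hαn : α ^ n = 1 := hα.pow_eq_one
  -- characteristic 2
  have hringF : ringChar F = 2 := by
    obtain ⟨k, hk, hck⟩ := FiniteField.card F (ringChar F)
    have hdvd : ringChar F ∣ 2 ^ s := by
      rw [← hq, ← hF, hck]
      exact dvd_pow_self _ (by exact_mod_cast k.ne_zero)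
    exact (Nat.prime_dvd_prime_iff_eq hk Nat.prime_two).mp (hk.dvd_of_dvd_pow hdvd)
  haveI hcharF : CharP F 2 := by rw [← hringF]; exact ringChar.charP F
  haveI hcharK : CharP K 2 := charP_of_injective_algebraMap (algebraMap F K).injective 2
  haveI : Fact (Nat.Prime 2) := ⟨Nat.prime_two⟩
  have h2K : ∀ z : K, z + z = 0 := fun z => by
    have h0 : (2 : K) = 0 := by exact_mod_cast CharP.cast_eq_zero K 2
    linear_combination z * h0
  have hpow : (2 : ℕ) ^ (s * m) = q ^ m := by rw [hq, pow_mul]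
  have hfrobF : ∀ a : F, algebraMap F K a ^ (2 : ℕ) ^ (s * m) = algebraMap F K a := by
    intro a
    rw [← map_pow, hpow, ← hF, FiniteField.pow_card_pow]
  -- Frobenius applied to the defining equation
  have hfrob : ∑ j, algebraMap F K (c j) * (α ^ (j : ℕ)) ^ (n - 1) = 0 := by
    have h1 := sum_pow_char_pow (R := K) (p := 2) (n := s * m) Finset.univ
      (fun j : Fin n => algebraMap F K (c j) * α ^ (j : ℕ))
    rw [hcsum, zero_pow (by positivity)] at h1
    rw [← h1.symm]
    refine Finset.sum_congr rfl fun j _ => ?_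
    rw [mul_pow, hfrobF, hpow]
    congr 2
    omega
  -- support
  set supp : Finset (Fin n) := Finset.filter (fun i => c i ≠ 0) Finset.univ with hsupp
  have hns : hammingNorm c = supp.card := rfl
  have hsum_suppK : ∀ (f : Fin n → K),
      (∀ j, c j = 0 → f j = 0) → ∑ j, f j = ∑ j ∈ supp, f j := by
    intro f hf
    refine (Finset.sum_subset (Finset.subset_univ _) fun j _ hj => ?_).symm
    refine hf j ?_
    simpa [hsupp] using hj
  have hsum_suppF : ∀ (f : Fin n → F),
      (∀ j, c j = 0 → f j = 0) → ∑ j, f j = ∑ j ∈ supp, f j := by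
    intro f hf
    refine (Finset.sum_subset (Finset.subset_univ _) fun j _ hj => ?_).symm
    refine hf j ?_
    simpa [hsupp] using hj
  have hzero : ∀ j, c j = 0 → algebraMap F K (c j) * α ^ (j : ℕ) = 0 := by
    intro j hj
    rw [hj, map_zero, zero_mul]
  have hzero' : ∀ j, c j = 0 → algebraMap F K (c j) * (α ^ (j : ℕ)) ^ (n - 1) = 0 := by
    intro j hj
    rw [hj, map_zero, zero_mul]
  have hmem : ∀ j ∈ supp, c j ≠ 0 := by
    intro j hj
    simpa [hsupp] using hj
  have hα0 : ∀ j : Fin n, α ^ (j : ℕ) ≠ 0 := by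
    intro j
    apply pow_ne_zero
    intro h0
    rw [h0, zero_pow hn0] at hαn
    exact zero_ne_one hαn
  have hinv : ∀ j : Fin n, (α ^ (j : ℕ)) ^ (n - 1) * α ^ (j : ℕ) = 1 := by
    intro j
    rw [← pow_succ, show n - 1 + 1 = n by omega, ← pow_mul, mul_comm (j : ℕ) n, pow_mul, hαn,
      one_pow]
  have hdist : ∀ i j : Fin n, i ≠ j → α ^ (i : ℕ) ≠ α ^ (j : ℕ) := by
    intro i j hij h
    exact hij (Fin.ext (hα.pow_inj i.isLt j.isLt h))
  have hAne : ∀ j ∈ supp, algebraMap F K (c j) ≠ 0 := by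
    intro j hj h
    exact hmem j hj ((map_eq_zero _).mp h)
  have hsumA : ∑ j, algebraMap F K (c j) * α ^ (j : ℕ)
      = ∑ j ∈ supp, algebraMap F K (c j) * α ^ (j : ℕ) := hsum_suppK _ hzero
  have hsumB : ∑ j, algebraMap F K (c j) * (α ^ (j : ℕ)) ^ (n - 1)
      = ∑ j ∈ supp, algebraMap F K (c j) * (α ^ (j : ℕ)) ^ (n - 1) := hsum_suppK _ hzero'
  have hsumF : ∑ j, c j = ∑ j ∈ supp, c j := hsum_suppF _ (fun _ h => h)
  have hw1 : 1 ≤ hammingNorm c := by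
    have := hammingNorm_eq_zero (x := c)
    rcases Nat.eq_zero_or_pos (hammingNorm c) with h | h
    · exact absurd (this.mp h) hc0
    · omega
  constructor
  · -- weight at least 3
    by_contra hlt
    push_neg at hlt
    have : supp.card = 1 ∨ supp.card = 2 := by rw [hns] at hlt hw1; omega
    rcases this with h1 | h2
    · obtain ⟨i, hi⟩ := Finset.card_eq_one.mp h1
      have hisupp : i ∈ supp := by rw [hi]; exact Finset.mem_singleton_self i
      rw [hsumA, hi, Finset.sum_singleton] at hcsum
      rcases mul_eq_zero.mp hcsum with h | h
      · exact hAne i hisupp h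
      · exact hα0 i h
    · obtain ⟨i, j, hij, hij2⟩ := Finset.card_eq_two.mp h2
      have hisupp : i ∈ supp := by rw [hij2]; simp
      have hjsupp : j ∈ supp := by rw [hij2]; simp
      have e1 : algebraMap F K (c i) * α ^ (i : ℕ) + algebraMap F K (c j) * α ^ (j : ℕ) = 0 := by
        have h := hcsum
        rw [hsumA, hij2, Finset.sum_pair hij] at h
        exact h
      have e2 : algebraMap F K (c i) * (α ^ (i : ℕ)) ^ (n - 1)
          + algebraMap F K (c j) * (α ^ (j : ℕ)) ^ (n - 1) = 0 := by
        have h := hfrob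
        rw [hsumB, hij2, Finset.sum_pair hij] at h
        exact h
      -- the key two-term argument
      have e2' : algebraMap F K (c i) * α ^ (j : ℕ) + algebraMap F K (c j) * α ^ (i : ℕ) = 0 := by
        linear_combination (α ^ (i : ℕ) * α ^ (j : ℕ)) * e2
          - algebraMap F K (c i) * α ^ (j : ℕ) * hinv i
          - algebraMap F K (c j) * α ^ (i : ℕ) * hinv j
      have h1' := char2_eq_of_add_eq_zero' h2K e1
      have h2' := char2_eq_of_add_eq_zero' h2K e2'
      have hsq : algebraMap F K (c i) * algebraMap F K (c j) * (α ^ (i : ℕ) * α ^ (i : ℕ))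
          = algebraMap F K (c i) * algebraMap F K (c j) * (α ^ (j : ℕ) * α ^ (j : ℕ)) := by
        linear_combination algebraMap F K (c j) * α ^ (i : ℕ) * h1'
          - algebraMap F K (c j) * α ^ (j : ℕ) * h2'
      have hbb : α ^ (i : ℕ) * α ^ (i : ℕ) = α ^ (j : ℕ) * α ^ (j : ℕ) :=
        mul_left_cancel₀ (mul_ne_zero (hAne i hisupp) (hAne j hjsupp)) hsq
      have hz : (α ^ (i : ℕ) + α ^ (j : ℕ)) * (α ^ (i : ℕ) + α ^ (j : ℕ)) = 0 := by
        linear_combination hbb + h2K (α ^ (j : ℕ) * α ^ (j : ℕ)) + h2K (α ^ (i : ℕ) * α ^ (j : ℕ))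
      exact hdist i j hij (char2_eq_of_add_eq_zero' h2K (mul_self_eq_zero.mp hz))
  · -- weight 3 implies nonzero coordinate sum
    intro h3 hsum0
    have h3' : supp.card = 3 := by rw [← hns]; exact h3
    obtain ⟨i, j, k, hij, hik, hjk, hijk⟩ := Finset.card_eq_three.mp h3'
    have hisupp : i ∈ supp := by rw [hijk]; simp
    have hjsupp : j ∈ supp := by rw [hijk]; simp
    have hksupp : k ∈ supp := by rw [hijk]; simp
    have htripleK : ∀ (f : Fin n → K),
        ∑ x ∈ ({i, j, k} : Finset (Fin n)), f x = f i + f j + f k := by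
      intro f
      rw [Finset.sum_insert (by simp [hij, hik]), Finset.sum_insert (by simp [hjk]),
        Finset.sum_singleton, add_assoc]
    have htripleF : ∀ (f : Fin n → F),
        ∑ x ∈ ({i, j, k} : Finset (Fin n)), f x = f i + f j + f k := by
      intro f
      rw [Finset.sum_insert (by simp [hij, hik]), Finset.sum_insert (by simp [hjk]),
        Finset.sum_singleton, add_assoc]
    have hzF : ∀ j : Fin n, c j = 0 → c j = 0 := fun _ h => h
    have e0F : c i + c j + c k = 0 := by
      have h := hsum0
      rw [hsumF, hijk, htripleF] at h
      exact h
    have e0 : algebraMap F K (c i) + algebraMap F K (c j) + algebraMap F K (c k) = 0 := by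
      rw [← map_add, ← map_add, e0F, map_zero]
    have e1 : algebraMap F K (c i) * α ^ (i : ℕ) + algebraMap F K (c j) * α ^ (j : ℕ)
        + algebraMap F K (c k) * α ^ (k : ℕ) = 0 := by
      have h := hcsum
      rw [hsumA, hijk, htripleK] at h
      exact h
    have e2 : algebraMap F K (c i) * (α ^ (i : ℕ)) ^ (n - 1)
        + algebraMap F K (c j) * (α ^ (j : ℕ)) ^ (n - 1)
        + algebraMap F K (c k) * (α ^ (k : ℕ)) ^ (n - 1) = 0 := by
      have h := hfrob
      rw [hsumB, hijk, htripleK] at h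
      exact h
    -- the key three-term argument
    have e3 : algebraMap F K (c i) * α ^ (j : ℕ) * α ^ (k : ℕ)
        + algebraMap F K (c j) * α ^ (i : ℕ) * α ^ (k : ℕ)
        + algebraMap F K (c k) * α ^ (i : ℕ) * α ^ (j : ℕ) = 0 := by
      linear_combination (α ^ (i : ℕ) * α ^ (j : ℕ) * α ^ (k : ℕ)) * e2
        - algebraMap F K (c i) * α ^ (j : ℕ) * α ^ (k : ℕ) * hinv i
        - algebraMap F K (c j) * α ^ (i : ℕ) * α ^ (k : ℕ) * hinv j
        - algebraMap F K (c k) * α ^ (i : ℕ) * α ^ (j : ℕ) * hinv k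
    have hkey : algebraMap F K (c j) * (α ^ (j : ℕ) + α ^ (k : ℕ))
        * (α ^ (i : ℕ) + α ^ (j : ℕ)) = 0 := by
      linear_combination α ^ (j : ℕ) * e1 + e3
        + (α ^ (j : ℕ) * α ^ (k : ℕ) + α ^ (i : ℕ) * α ^ (j : ℕ)) * e0
        - h2K (algebraMap F K (c i) * α ^ (i : ℕ) * α ^ (j : ℕ))
        - h2K (algebraMap F K (c i) * α ^ (j : ℕ) * α ^ (k : ℕ))
        - h2K (algebraMap F K (c k) * α ^ (j : ℕ) * α ^ (k : ℕ))
        - h2K (algebraMap F K (c k) * α ^ (i : ℕ) * α ^ (j : ℕ))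
    rcases mul_eq_zero.mp hkey with h | h
    · rcases mul_eq_zero.mp h with h | h
      · exact hAne j hjsupp h
      · exact hdist j k hjk (char2_eq_of_add_eq_zero' h2K h)
    · exact hdist i j hij (char2_eq_of_add_eq_zero' h2K h)

end MinWeight

/-- for `q = 2^s`, `s ≥ 2`, `n = q^m + 1`, and the cyclic code of
length `n` with generator polynomial `M_α(x)` (the words vanishing at the
primitive `n`-th root of unity `α`), the standardly extended code has parameters
`[n+1, n-2m, 4]` and is distance-optimal. -/
theorem stmt11 {F K : Type*} [Field F] [Fintype F] [DecidableEq F]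
    [Field K] [Fintype K] [Algebra F K]
    (q s m n : ℕ) (hq : q = 2 ^ s) (hs : 2 ≤ s) (hm : 1 ≤ m)
    (hF : Fintype.card F = q) (hn : n = q ^ m + 1)
    (hK : Fintype.card K = q ^ (2 * m))
    (α : K) (hα : IsPrimitiveRoot α n)
    (C : Submodule F (Fin n → F))
    (hC : ∀ c, c ∈ C ↔ ∑ j, algebraMap F K (c j) * α ^ (j : ℕ) = 0) :
    Module.finrank F (extCode C (fun _ => -1)) = n - 2 * m ∧
    minDist (extCode C (fun _ => -1)) = 4 ∧
    ∀ D : Submodule F (Fin (n + 1) → F),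
      Module.finrank F D = n - 2 * m → ¬ (5 ≤ minDist D) := by
  classical
  have hq4 : 4 ≤ q := by
    rw [hq]
    calc (4 : ℕ) = 2 ^ 2 := rfl
    _ ≤ 2 ^ s := Nat.pow_le_pow_right (by omega) hs
  have h2m : 2 * m + 1 ≤ n := by
    have h1 : m < 2 ^ m := Nat.lt_two_pow_self (n := m)
    have h2 : 2 ≤ 2 ^ m := by
      calc 2 = 2 ^ 1 := rfl
      _ ≤ 2 ^ m := Nat.pow_le_pow_right (by omega) hm
    have h3 : 2 ^ m * 2 ^ m ≤ q ^ m := by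
      calc 2 ^ m * 2 ^ m = (2 * 2) ^ m := by rw [mul_pow]
      _ ≤ q ^ m := Nat.pow_le_pow_left (by omega) m
    have h4 : 2 * (m + 1) ≤ 2 ^ m * 2 ^ m := by nlinarith
    omega
  have hfrC : Module.finrank F C = n - 2 * m :=
    finrank_rootCode q s m n hq hs hm hF hn hK α hα C hC
  have hfrE : Module.finrank F (extCode C (fun _ => -1)) = n - 2 * m := by
    rw [finrank_extCode]
    exact hfrC
  have hopt : ∀ D : Submodule F (Fin (n + 1) → F),
      Module.finrank F D = n - 2 * m → ¬ (5 ≤ minDist D) :=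
    fun D hD h5 => no_good_code q m n hq4 hm hF hn D hD h5
  refine ⟨hfrE, ?_, hopt⟩
  -- lower bound 4 on weights
  have hge : ∀ x ∈ extCode C (fun _ => -1), x ≠ 0 → 4 ≤ hammingNorm x := by
    intro x hx hx0
    obtain ⟨hc, hlast⟩ := hx
    have hsplit := hammingNorm_split x
    by_cases hcz : (fun i : Fin n => x i.castSucc) = 0
    · exfalso
      apply hx0
      funext k
      simp only [Pi.zero_apply]
      refine Fin.lastCases ?_ (fun i => ?_) k
      · rw [hlast]
        refine Finset.sum_eq_zero fun i _ => ?_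
        rw [show x i.castSucc = 0 from congrFun hcz i, mul_zero]
      · exact congrFun hcz i
    have hcsum := (hC (fun i : Fin n => x i.castSucc)).mp hc
    have hkey := rootCode_min_weight q s m n hq hs hm hF hn α hα
      (fun i : Fin n => x i.castSucc) hcsum hcz
    by_cases hl : x (Fin.last n) = 0
    · rw [hsplit, if_neg (by simpa using hl)]
      rcases Nat.lt_or_ge (hammingNorm (fun i : Fin n => x i.castSucc)) 4 with hlt | hge4
      · exfalso
        have h3 : hammingNorm (fun i : Fin n => x i.castSucc) = 3 := by
          have := hkey.1
          omega
        apply hkey.2 h3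
        have h1 : ∑ i : Fin n, (-1 : F) * x i.castSucc = 0 := by rw [← hlast]; exact hl
        have h2 : -∑ i : Fin n, x i.castSucc = 0 := by
          rw [← h1, ← Finset.sum_neg_distrib]
          exact Finset.sum_congr rfl fun i _ => by ring
        exact neg_eq_zero.mp h2
      · omega
    · rw [hsplit, if_pos (by simpa using hl)]
      have := hkey.1
      omega
  -- a nonzero codeword exists
  have hne : ∃ x ∈ extCode C (fun _ => -1), x ≠ 0 := by
    by_contra hcon
    push_neg at hcon
    have hbot : extCode C (fun _ => -1) = ⊥ := (Submodule.eq_bot_iff _).mpr hcon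
    rw [hbot, finrank_bot] at hfrE
    omega
  obtain ⟨x0, hx0, hx00⟩ := hne
  have hSne : {w | ∃ c ∈ extCode C (fun _ => -1), c ≠ 0 ∧ hammingNorm c = w}.Nonempty :=
    ⟨hammingNorm x0, x0, hx0, hx00, rfl⟩
  have hmem : minDist (extCode C (fun _ => -1)) ∈
      {w | ∃ c ∈ extCode C (fun _ => -1), c ≠ 0 ∧ hammingNorm c = w} := Nat.sInf_mem hSne
  obtain ⟨c0, hc0, hc00, hcw⟩ := hmem
  have h4 : 4 ≤ minDist (extCode C (fun _ => -1)) := by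
    rw [← hcw]
    exact hge c0 hc0 hc00
  have h5 := hopt _ hfrE
  omega
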